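/- Let G be a standard Gaussian random variable, X = exp(μ + λG), and let X^d be the L² projection of X onto the span of {H_0(G), ..., H_d(G)}. Then ‖X − X^d‖₂² ≤ exp(2μ + 2λ²) · λ^{2(d+1)}/(d+1)!. -/

import Mathlib

/-!
Since `H (n + 1) = X * H n - H n'` and `p ↦ X * p - p'` is the adjoint of differentiation in
`L²` of the standard Gaussian measure (Stein's lemma), `E[H n (G) q (G)] = E[q⁽ⁿ⁾ (G)]` for every
polynomial `q`. This gives `E[H m (G) H n (G)] = n! δₘₙ` and, carrying an exponential weight
along, `E[exp (λ G) H n (G)] = λⁿ exp (λ² / 2)`. By Pythagoras the squared error of the projection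
is `exp (2μ + 2λ²) - exp (2μ + λ²) ∑_{n ≤ d} λ²ⁿ / n!`, that is `exp (2μ + λ²)` times the tail of
the exponential series at `λ²`, and this tail is at most `(λ²)^(d+1) / (d+1)! * exp λ²`.
-/

open Polynomial Finset ProbabilityTheory MeasureTheory Real
open scoped NNReal

lemma Real.exp_sub_sum_range_le {x : ℝ} (hx : 0 ≤ x) (n : ℕ) :
    exp x - ∑ i ∈ range n, x ^ i / i.factorial ≤ x ^ n / n.factorial * exp x := by
  have hs := Real.summable_pow_div_factorial x
  have hexp : exp x = ∑' i, x ^ i / i.factorial := by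
    rw [Real.exp_eq_exp_ℝ, NormedSpace.exp_eq_tsum_div]
  have hterm (i : ℕ) :
      x ^ (i + n) / (i + n).factorial ≤ x ^ n / n.factorial * (x ^ i / i.factorial) :=
    calc x ^ (i + n) / (i + n).factorial ≤ x ^ (i + n) / (i.factorial * n.factorial) := by
          gcongr
          exact_mod_cast Nat.le_of_dvd (Nat.factorial_pos _)
            (Nat.factorial_mul_factorial_dvd_factorial_add i n)
      _ = x ^ n / n.factorial * (x ^ i / i.factorial) := by rw [pow_add]; ring
  calc exp x - ∑ i ∈ range n, x ^ i / i.factorial = ∑' i, x ^ (i + n) / (i + n).factorial := by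
        rw [hexp, ← hs.sum_add_tsum_nat_add n, add_sub_cancel_left]
    _ ≤ ∑' i, x ^ n / n.factorial * (x ^ i / i.factorial) :=
        Summable.tsum_le_tsum hterm
          ((summable_nat_add_iff (f := fun i ↦ x ^ i / (i.factorial : ℝ)) n).2 hs) (hs.mul_left _)
    _ = x ^ n / n.factorial * exp x := by rw [tsum_mul_left, hexp]

lemma Real.exp_add_mul_sq (μ l x : ℝ) :
    exp (μ + l * x) ^ 2 = exp (2 * μ) * exp (2 * l * x) := by
  rw [sq, ← exp_add, ← exp_add]; ring_nf

namespace MeasureTheory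

variable {Ω ι : Type*} [MeasurableSpace Ω] {ν : Measure Ω}

theorem integral_sq_sub_sum_orthogonalProjection {f : Ω → ℝ} {g : ι → Ω → ℝ} (s : Finset ι)
    (hf : MemLp f 2 ν) (hg : ∀ i ∈ s, MemLp (g i) 2 ν)
    (horth : ∀ i ∈ s, ∀ j ∈ s, i ≠ j → ∫ ω, g i ω * g j ω ∂ν = 0) :
    ∫ ω, (f ω - ∑ i ∈ s, (∫ ω', f ω' * g i ω' ∂ν) / (∫ ω', g i ω' * g i ω' ∂ν) * g i ω) ^ 2 ∂ν =
      ∫ ω, f ω ^ 2 ∂ν - ∑ i ∈ s, (∫ ω, f ω * g i ω ∂ν) ^ 2 / ∫ ω, g i ω * g i ω ∂ν := by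
  set a : ι → ℝ := fun i ↦ ∫ ω, f ω * g i ω ∂ν
  set w : ι → ℝ := fun i ↦ ∫ ω, g i ω * g i ω ∂ν
  have hfg : ∀ i ∈ s, Integrable (fun ω ↦ f ω * g i ω) ν := fun i hi ↦ hf.integrable_mul (hg i hi)
  have hgg : ∀ i ∈ s, ∀ j ∈ s, Integrable (fun ω ↦ g i ω * g j ω) ν :=
    fun i hi j hj ↦ (hg i hi).integrable_mul (hg j hj)
  have hcross_int : Integrable (fun ω ↦ ∑ i ∈ s, a i / w i * (f ω * g i ω)) ν :=
    integrable_finsetSum _ fun i hi ↦ (hfg i hi).const_mul _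
  have hdiag_int : Integrable
      (fun ω ↦ ∑ i ∈ s, ∑ j ∈ s, a i / w i * (a j / w j) * (g i ω * g j ω)) ν :=
    integrable_finsetSum _ fun i hi ↦ integrable_finsetSum _ fun j hj ↦ (hgg i hi j hj).const_mul _
  have hexpand : ∀ ω, (f ω - ∑ i ∈ s, a i / w i * g i ω) ^ 2 = f ω ^ 2 -
      2 * ∑ i ∈ s, a i / w i * (f ω * g i ω) +
        ∑ i ∈ s, ∑ j ∈ s, a i / w i * (a j / w j) * (g i ω * g j ω) := fun ω ↦ by
    rw [sub_sq, sq (∑ i ∈ s, _), sum_mul_sum, mul_assoc, mul_sum]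
    congr 1
    · congr 2
      exact sum_congr rfl fun i _ ↦ by ring
    · exact sum_congr rfl fun i _ ↦ sum_congr rfl fun j _ ↦ by ring
  have hcross : ∫ ω, ∑ i ∈ s, a i / w i * (f ω * g i ω) ∂ν = ∑ i ∈ s, a i ^ 2 / w i := by
    rw [integral_finsetSum _ fun i hi ↦ (hfg i hi).const_mul _]
    refine sum_congr rfl fun i _ ↦ ?_
    rw [integral_const_mul]
    ring
  have hdiag : ∫ ω, ∑ i ∈ s, ∑ j ∈ s, a i / w i * (a j / w j) * (g i ω * g j ω) ∂ν =
      ∑ i ∈ s, a i ^ 2 / w i := by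
    rw [integral_finsetSum _ fun i hi ↦ integrable_finsetSum _ fun j hj ↦
      (hgg i hi j hj).const_mul _]
    refine sum_congr rfl fun i hi ↦ ?_
    rw [integral_finsetSum _ fun j hj ↦ (hgg i hi j hj).const_mul _,
      sum_eq_single_of_mem i hi fun j hj hji ↦ by
        rw [integral_const_mul, horth i hi j hj hji.symm, mul_zero],
      integral_const_mul]
    rcases eq_or_ne (w i) 0 with hw | hw
    · simp [w, hw]
    · rw [div_mul_div_comm, div_mul_eq_mul_div, mul_div_mul_right _ _ hw, sq]
  refine (integral_congr_ae (ae_of_all _ hexpand)).trans ?_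
  rw [integral_add (by exact hf.integrable_sq.sub (hcross_int.const_mul 2)) hdiag_int,
    integral_sub hf.integrable_sq (hcross_int.const_mul 2), integral_const_mul, hcross, hdiag]
  ring

end MeasureTheory

namespace ProbabilityTheory

variable {μ : ℝ} {v : ℝ≥0}

lemma integrable_gaussianReal_iff {E : Type*} [NormedAddCommGroup E] [NormedSpace ℝ E]
    (hv : v ≠ 0) {f : ℝ → E} :
    Integrable f (gaussianReal μ v) ↔ Integrable (fun x ↦ gaussianPDFReal μ v x • f x) := by
  rw [gaussianReal_of_var_ne_zero _ hv, integrable_withDensity_iff_integrable_smul'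
    (measurable_gaussianPDF _ _) (ae_of_all _ fun _ ↦ gaussianPDF_lt_top)]
  simp only [toReal_gaussianPDF]

lemma hasDerivAt_gaussianPDFReal (μ : ℝ) (v : ℝ≥0) (x : ℝ) :
    HasDerivAt (gaussianPDFReal μ v) (-((x - μ) / v) * gaussianPDFReal μ v x) x := by
  have h := ((((((hasDerivAt_id' x).sub_const μ).fun_pow 2).fun_neg).div_const
    (2 * (v : ℝ))).exp).const_mul (√(2 * π * v))⁻¹
  rw [gaussianPDFReal_def]
  refine h.congr_deriv ?_
  rcases eq_or_ne (v : ℝ) 0 with hv | hv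
  · simp [hv]
  · field_simp; ring

/-- Stein's lemma. -/
theorem integral_sub_mul_eq_mul_integral_deriv_gaussianReal (hv : v ≠ 0) {f f' : ℝ → ℝ}
    (hderiv : ∀ x, HasDerivAt f (f' x) x) (hf : Integrable f (gaussianReal μ v))
    (hf' : Integrable f' (gaussianReal μ v))
    (hxf : Integrable (fun x ↦ (x - μ) * f x) (gaussianReal μ v)) :
    ∫ x, (x - μ) * f x ∂gaussianReal μ v = v * ∫ x, f' x ∂gaussianReal μ v := by
  rw [integrable_gaussianReal_iff hv] at hf hf' hxf
  simp only [integral_gaussianReal_eq_integral_smul hv, smul_eq_mul] at *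
  have hsplit : ∀ x, -((x - μ) / v) * gaussianPDFReal μ v x * f x +
      gaussianPDFReal μ v x * f' x = gaussianPDFReal μ v x * f' x -
        (v : ℝ)⁻¹ * (gaussianPDFReal μ v x * ((x - μ) * f x)) := fun x ↦ by ring
  -- `(φ f)' = φ f' - (x - μ) / v * φ f` is integrable, so its integral over `ℝ` vanishes.
  have hzero := integral_eq_zero_of_hasDerivAt_of_integrable
    (fun x ↦ (hasDerivAt_gaussianPDFReal μ v x).mul (hderiv x))
    ((hf'.sub (hxf.const_mul _)).congr (ae_of_all _ fun x ↦ (hsplit x).symm)) hf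
  rw [funext hsplit, integral_sub hf' (hxf.const_mul _), integral_const_mul,
    sub_eq_zero] at hzero
  rw [hzero, mul_inv_cancel_left₀ (NNReal.coe_ne_zero.2 hv)]

section Polynomial

variable {R : Type*} [CommRing R] [Algebra R ℝ]

lemma integrable_aeval_mul_exp_mul_gaussianReal (q : R[X]) (l : ℝ) :
    Integrable (fun x ↦ aeval x q * exp (l * x)) (gaussianReal μ v) := by
  induction q using Polynomial.induction_on' with
  | add p q hp hq => simpa only [map_add, add_mul] using hp.fun_add hq
  | monomial n a =>
    simpa only [aeval_monomial, mul_assoc, id] using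
      (integrable_pow_mul_exp_of_mem_interior_integrableExpSet
        (X := id) (μ := gaussianReal μ v) (by simp) n).const_mul (algebraMap R ℝ a)

lemma memLp_aeval_gaussianReal (q : R[X]) : MemLp (fun x ↦ aeval x q) 2 (gaussianReal μ v) := by
  refine (memLp_two_iff_integrable_sq (Polynomial.continuous_aeval q).aestronglyMeasurable).2 ?_
  refine (integrable_aeval_mul_exp_mul_gaussianReal (q ^ 2) 0).congr (ae_of_all _ fun x ↦ ?_)
  simp only [map_pow, zero_mul, exp_zero, mul_one]

lemma integral_aeval_X_mul_sub_derivative_mul_exp_mul (p q : R[X]) (l : ℝ) :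
    ∫ x, aeval x (X * p - derivative p) * (aeval x q * exp (l * x)) ∂gaussianReal 0 1 =
      ∫ x, aeval x p * ((aeval x (derivative q) + l * aeval x q) * exp (l * x))
        ∂gaussianReal 0 1 := by
  set F : ℝ → ℝ := fun x ↦ aeval x (p * q) * exp (l * x)
  set F' : ℝ → ℝ := fun x ↦ (aeval x (derivative (p * q)) + l * aeval x (p * q)) * exp (l * x)
  set G : ℝ → ℝ := fun x ↦ aeval x (derivative p * q) * exp (l * x)
  have hF : ∀ x, HasDerivAt F (F' x) x := fun x ↦
    (((p * q).hasDerivAt_aeval x).mul ((hasDerivAt_id x).const_mul l).exp).congr_deriv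
      (by simp only [F', id]; ring)
  have hint (r : R[X]) : Integrable (fun x ↦ aeval x r * exp (l * x)) (gaussianReal 0 1) :=
    integrable_aeval_mul_exp_mul_gaussianReal r l
  have hF' : Integrable F' (gaussianReal 0 1) := by
    simpa only [F', add_mul, mul_assoc] using
      (hint (derivative (p * q))).fun_add ((hint (p * q)).const_mul l)
  have hxF : Integrable (fun x ↦ (x - 0) * F x) (gaussianReal 0 1) := by
    refine (hint (X * (p * q))).congr (ae_of_all _ fun x ↦ ?_)
    simp only [F, map_mul, aeval_X, sub_zero, mul_assoc]
  calc ∫ x, aeval x (X * p - derivative p) * (aeval x q * exp (l * x)) ∂gaussianReal 0 1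
      = ∫ x, ((x - 0) * F x - G x) ∂gaussianReal 0 1 := by
        congr 1; ext x; simp only [F, G, map_sub, map_mul, aeval_X]; ring
    _ = ∫ x, (F' x - G x) ∂gaussianReal 0 1 := by
        rw [integral_sub hxF (hint _), integral_sub hF' (hint _),
          integral_sub_mul_eq_mul_integral_deriv_gaussianReal one_ne_zero hF (hint _) hF' hxF,
          NNReal.coe_one, one_mul]
    _ = _ := by
        congr 1; ext x; simp only [F', G, derivative_mul, map_add, map_mul]; ring

end Polynomial

lemma integral_exp_mul_gaussianReal (l : ℝ) :
    ∫ x, exp (l * x) ∂gaussianReal μ v = exp (μ * l + v * l ^ 2 / 2) := by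
  simpa [mgf] using congr_fun (mgf_fun_id_gaussianReal (μ := μ) (v := v)) l

lemma integral_aeval_hermite_mul_exp (n : ℕ) (l : ℝ) :
    ∫ x, aeval x (hermite n) * exp (l * x) ∂gaussianReal 0 1 = l ^ n * exp (l ^ 2 / 2) := by
  induction n with
  | zero => simp [integral_exp_mul_gaussianReal]
  | succ n ih =>
    have h := integral_aeval_X_mul_sub_derivative_mul_exp_mul (hermite n) 1 l
    simp only [map_one, one_mul, derivative_one, map_zero, zero_add, mul_one] at h
    simp_rw [hermite_succ, h, mul_left_comm _ l, integral_const_mul, ih, pow_succ']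
    ring

lemma integral_aeval_hermite_mul_aeval (n : ℕ) (q : ℤ[X]) :
    ∫ x, aeval x (hermite n) * aeval x q ∂gaussianReal 0 1 =
      ∫ x, aeval x (derivative^[n] q) ∂gaussianReal 0 1 := by
  induction n generalizing q with
  | zero => simp
  | succ n ih =>
    have h := integral_aeval_X_mul_sub_derivative_mul_exp_mul (hermite n) q 0
    simp only [zero_mul, exp_zero, mul_one, add_zero] at h
    rw [hermite_succ, h, ih, Function.iterate_succ_apply]

lemma iterate_derivative_hermite_self (n : ℕ) :
    derivative^[n] (hermite n) = (n.factorial : ℤ[X]) := by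
  rw [eq_C_of_natDegree_le_zero ((natDegree_iterate_derivative _ n).trans
    (by rw [natDegree_hermite, Nat.sub_self])), coeff_iterate_derivative, zero_add,
    coeff_hermite_self, Nat.descFactorial_self, nsmul_one, map_natCast]

lemma integral_aeval_hermite_mul_aeval_hermite (m n : ℕ) :
    ∫ x, aeval x (hermite m) * aeval x (hermite n) ∂gaussianReal 0 1 =
      if m = n then (n.factorial : ℝ) else 0 := by
  have hlt {i j : ℕ} (hij : i < j) :
      ∫ x, aeval x (hermite j) * aeval x (hermite i) ∂gaussianReal 0 1 = 0 := by
    rw [integral_aeval_hermite_mul_aeval, iterate_derivative_eq_zero (by rwa [natDegree_hermite])]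
    simp
  rcases lt_trichotomy m n with h | rfl | h
  · simp_rw [if_neg h.ne, mul_comm (aeval _ (hermite m))]
    exact hlt h
  · simp [integral_aeval_hermite_mul_aeval, iterate_derivative_hermite_self]
  · rw [if_neg h.ne', hlt h]

lemma integral_exp_add_mul_mul_aeval_hermite (μ l : ℝ) (n : ℕ) :
    ∫ x, exp (μ + l * x) * aeval x (hermite n) ∂gaussianReal 0 1 =
      exp (μ + l ^ 2 / 2) * l ^ n := by
  simp_rw [exp_add, mul_assoc, integral_const_mul, mul_comm (exp (l * _)),
    integral_aeval_hermite_mul_exp]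
  ring

lemma integral_exp_add_mul_sq (μ l : ℝ) :
    ∫ x, exp (μ + l * x) ^ 2 ∂gaussianReal 0 1 = exp (2 * μ + 2 * l ^ 2) := by
  simp_rw [exp_add_mul_sq, integral_const_mul, integral_exp_mul_gaussianReal, zero_mul, zero_add,
    NNReal.coe_one, one_mul, ← exp_add]
  ring_nf

lemma memLp_exp_add_mul_gaussianReal (μ l : ℝ) :
    MemLp (fun x ↦ exp (μ + l * x)) 2 (gaussianReal 0 1) :=
  (memLp_two_iff_integrable_sq (by fun_prop)).2 <| by
    simpa only [exp_add_mul_sq] using (integrable_exp_mul_gaussianReal (2 * l)).const_mul _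

end ProbabilityTheory

/-- Truncation error for the Hermite expansion of `X = exp (μ + λ G)`:
the squared `L²` distance between `X` and its projection `X^d` onto the span of
`H_0(G), …, H_d(G)` (whose Hermite coefficients are `exp (μ + λ²/2) λⁿ/n!`) is at most
`exp (2μ + 2λ²) λ^{2(d+1)}/(d+1)!`. -/
theorem hermite_truncation_error_one_dim (μ l : ℝ) (d : ℕ) :
    ∫ x : ℝ, (Real.exp (μ + l * x) -
        ∑ n ∈ Finset.range (d + 1),
          Real.exp (μ + l ^ 2 / 2) * l ^ n / (n.factorial : ℝ) *
            (Polynomial.aeval x (Polynomial.hermite n) : ℝ)) ^ 2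
      ∂(gaussianReal 0 1) ≤
      Real.exp (2 * μ + 2 * l ^ 2) * l ^ (2 * (d + 1)) / ((d + 1).factorial : ℝ) := by
  have hpythagoras := integral_sq_sub_sum_orthogonalProjection (f := fun x ↦ exp (μ + l * x))
    (g := fun n x ↦ aeval x (hermite n)) (range (d + 1)) (memLp_exp_add_mul_gaussianReal μ l)
    (fun n _ ↦ memLp_aeval_gaussianReal (hermite n))
    (fun m _ n _ hmn ↦ by rw [integral_aeval_hermite_mul_aeval_hermite, if_neg hmn])
  simp only [integral_exp_add_mul_mul_aeval_hermite, integral_aeval_hermite_mul_aeval_hermite,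
    integral_exp_add_mul_sq, ↓reduceIte] at hpythagoras
  have hcoef (n : ℕ) : (exp (μ + l ^ 2 / 2) * l ^ n) ^ 2 / n.factorial =
      exp (2 * μ + l ^ 2) * ((l ^ 2) ^ n / n.factorial) := by
    rw [mul_pow, sq (exp _), ← exp_add, ← pow_mul, ← pow_mul']; ring_nf
  have hsplit : exp (2 * μ + 2 * l ^ 2) = exp (2 * μ + l ^ 2) * exp (l ^ 2) := by
    rw [← exp_add]; ring_nf
  calc _ = exp (2 * μ + l ^ 2) *
        (exp (l ^ 2) - ∑ n ∈ range (d + 1), (l ^ 2) ^ n / n.factorial) := by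
        rw [hpythagoras, mul_sub, mul_sum, ← hsplit]; simp only [hcoef]
    _ ≤ exp (2 * μ + l ^ 2) * ((l ^ 2) ^ (d + 1) / (d + 1).factorial * exp (l ^ 2)) := by
        gcongr; exact exp_sub_sum_range_le (sq_nonneg l) _
    _ = _ := by rw [hsplit, ← pow_mul]; ring
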